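/- Let K be a simplicial complex of dimension d−1 (d ≥ 1) with n vertices, where n ≥ 9d + 1. Then K satisfies the Taylor upper bound strictly: f_{d−1}(K) < (∏_{i=1}^{n−d} M̃_i(K))/(n−d)!. -/

import Mathlib

open Finset

/-- A simplicial complex on a finite vertex set: a collection of finite subsets
(faces) of the vertex set, closed under inclusion, containing every singleton. -/
structure SC (α : Type*) [DecidableEq α] where
  verts : Finset α
  faces : Finset (Finset α)
  subset_verts : ∀ F ∈ faces, F ⊆ verts
  down_closed : ∀ F ∈ faces, ∀ G, G ⊆ F → G ∈ faces
  singleton_mem : ∀ v ∈ verts, {v} ∈ faces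

namespace SC

variable {α : Type*} [DecidableEq α]

/-- `dimP1 K = dim K + 1`: the maximal number of vertices of a face. -/
def dimP1 (K : SC α) : ℕ := K.faces.sup Finset.card

/-- The number of faces with exactly `j` vertices, i.e. `f_{j-1}(K)`. -/
def fCard (K : SC α) (j : ℕ) : ℕ := (K.faces.filter (fun F => F.card = j)).card

/-- The minimal non-faces of `K`: subsets of the vertex set which are not faces,
all of whose proper subsets are faces. -/
def minNonFaces (K : SC α) : Finset (Finset α) :=
  K.verts.powerset.filter (fun F => F ∉ K.faces ∧ ∀ G ∈ F.powerset, G ≠ F → G ∈ K.faces)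

/-- The `i`-th minimal Taylor shift `m̃_i(K)`: the minimal number of vertices covered by
a set of exactly `i` minimal non-faces of `K`. -/
noncomputable def mT (K : SC α) (i : ℕ) : ℕ :=
  sInf {n | ∃ T ⊆ K.minNonFaces, T.card = i ∧ (T.sup id).card = n}

/-- The `i`-th maximal Taylor shift `M̃_i(K)`: the maximal number of vertices covered by
a set of exactly `i` minimal non-faces of `K`. -/
noncomputable def MT (K : SC α) (i : ℕ) : ℕ :=
  sSup {n | ∃ T ⊆ K.minNonFaces, T.card = i ∧ (T.sup id).card = n}

/-- The conjectured Taylor upper bound `(∏_{i=1}^{n-d} M̃_i(K))/(n-d)!` on `f_{d-1}(K)`. -/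
noncomputable def taylorUBval (K : SC α) : ℚ :=
  (∏ i ∈ Finset.Icc 1 (K.verts.card - K.dimP1), (K.MT i : ℚ)) /
    (Nat.factorial (K.verts.card - K.dimP1))

/-- The conjectured Taylor lower bound `(∏_{i=1}^{n-d} m̃_i(K))/(n-d)!` on `f_{d-1}(K)`. -/
noncomputable def taylorLBval (K : SC α) : ℚ :=
  (∏ i ∈ Finset.Icc 1 (K.verts.card - K.dimP1), (K.mT i : ℚ)) /
    (Nat.factorial (K.verts.card - K.dimP1))

/-- `K` satisfies the Taylor upper bound: `f_{d-1}(K) ≤ (∏_{i=1}^{n-d} M̃_i(K))/(n-d)!`. -/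
def TaylorUB (K : SC α) : Prop := (K.fCard K.dimP1 : ℚ) ≤ K.taylorUBval

/-- `K` satisfies the Taylor lower bound: `f_{d-1}(K) ≥ (∏_{i=1}^{n-d} m̃_i(K))/(n-d)!`. -/
def TaylorLB (K : SC α) : Prop := K.taylorLBval ≤ (K.fCard K.dimP1 : ℚ)

/-- The induced subcomplex `K[W]`: the faces of `K` contained in `W`. -/
def induced (K : SC α) (W : Finset α) : SC α where
  verts := K.verts ∩ W
  faces := K.faces.filter (fun F => F ⊆ W)
  subset_verts := by
    intro F hF
    simp only [mem_filter] at hF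
    exact subset_inter (K.subset_verts F hF.1) hF.2
  down_closed := by
    intro F hF G hG
    simp only [mem_filter] at hF ⊢
    exact ⟨K.down_closed F hF.1 G hG, hG.trans hF.2⟩
  singleton_mem := by
    intro v hv
    simp only [mem_inter] at hv
    simp only [mem_filter, singleton_subset_iff]
    exact ⟨K.singleton_mem v hv.1, hv.2⟩

end SC

/-!
Minimal non-faces have at least two vertices, and every set of more than `d` vertices is a
non-face, so it contains a minimal non-face. Choosing minimal non-faces greedily, each disjoint
from the previous ones as long as more than `d` vertices are uncovered, and arbitrary ones
afterwards (there are at least `n - d` of them, one inside `F ∪ {v}` for each vertex `v` outside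
a facet `F`), gives `M̃_i(K) ≥ min (2i) (n - d)`. Together with `f_{d-1}(K) ≤ C(n, d)` this
reduces the theorem to `C(n, d) (n - d)! < ∏_{i=1}^{n-d} min (2i) (n - d)`. Raising `n` by one
multiplies the left side by `n + 1` and the right side by at least that much, by Bernoulli's
inequality. At `n = 9d + 1` the right side is `2^{4d} (4d)! (8d+1)^{4d+1}`, and the inequality
follows by induction on `d`, comparing `(8d+9)^{4d+5}` with `(8d+1)^{4d+1}` through the first
five terms of the binomial expansion.
-/

open scoped Nat

def prodMinTwoMul (N : ℕ) : ℕ := ∏ i ∈ Icc 1 N, min (2 * i) N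

lemma prod_Ico_min_two_mul_of_le {N a : ℕ} (h : N ≤ 2 * a) (b : ℕ) :
    ∏ i ∈ Ico a b, min (2 * i) N = N ^ (b - a) := by
  rw [prod_congr rfl fun i hi => min_eq_right (by rw [mem_Ico] at hi; omega), prod_const,
    Nat.card_Ico]

lemma prodMinTwoMul_two_mul_add_one (m : ℕ) :
    prodMinTwoMul (2 * m + 1) = 2 ^ m * m ! * (2 * m + 1) ^ (m + 1) := by
  have hlow : ∏ i ∈ Ico 1 (m + 1), min (2 * i) (2 * m + 1) = 2 ^ m * m ! := by
    rw [prod_congr rfl fun i hi => min_eq_left (by rw [mem_Ico] at hi; omega), prod_mul_distrib,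
      prod_const, Nat.card_Ico, prod_Ico_id_eq_factorial, Nat.add_sub_cancel]
  rw [prodMinTwoMul, ← Ico_add_one_right_eq_Icc, ← prod_Ico_consecutive _ (n := m + 1)
    (by omega) (by omega), hlow, prod_Ico_min_two_mul_of_le (by omega)]
  congr 2
  omega

lemma add_add_one_mul_pow_le_pow_succ (N d : ℕ) : (N + d + 1) * N ^ d ≤ (N + 1) ^ (d + 1) := by
  induction d with
  | zero => simp
  | succ d ih =>
    have hexpand : (N + (d + 1) + 1) * N ^ (d + 1) + (d + 1) * N ^ d
        = (N + d + 1) * N ^ d * (N + 1) := by ring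
    calc (N + (d + 1) + 1) * N ^ (d + 1) ≤ (N + d + 1) * N ^ d * (N + 1) :=
          hexpand ▸ Nat.le_add_right _ _
      _ ≤ (N + 1) ^ (d + 1) * (N + 1) := Nat.mul_le_mul_right _ ih
      _ = (N + 1) ^ (d + 1 + 1) := (pow_succ _ _).symm

lemma add_mul_prodMinTwoMul_le_succ {N d : ℕ} (h : 2 * d ≤ N) :
    (N + d + 1) * prodMinTwoMul N ≤ prodMinTwoMul (N + 1) := by
  have hsplit (M : ℕ) (hNM : N ≤ M) (hMN : M ≤ N + 1) : prodMinTwoMul M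
      = (∏ i ∈ Ico 1 (N - d + 1), min (2 * i) M) * M ^ (M - (N - d)) := by
    rw [prodMinTwoMul, ← Ico_add_one_right_eq_Icc,
      ← prod_Ico_consecutive _ (m := 1) (n := N - d + 1) (k := M + 1) (by omega) (by omega),
      prod_Ico_min_two_mul_of_le (a := N - d + 1) (by omega)]
    congr 2
    omega
  have hlow : ∏ i ∈ Ico 1 (N - d + 1), min (2 * i) N
      ≤ ∏ i ∈ Ico 1 (N - d + 1), min (2 * i) (N + 1) :=
    prod_le_prod' fun i _ => min_le_min_left _ (Nat.le_succ N)
  rw [hsplit N le_rfl (Nat.le_succ N), hsplit (N + 1) (Nat.le_succ N) le_rfl,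
    show N - (N - d) = d by omega, show N + 1 - (N - d) = d + 1 by omega, mul_left_comm]
  exact Nat.mul_le_mul hlow (add_add_one_mul_pow_le_pow_succ N d)

/-- `4!` times the first five terms of the binomial expansion of `(a + b) ^ (n + 4)`, divided
by `a ^ n`. -/
def binomialHead (a b n : ℕ) : ℕ :=
  24 * a ^ 4 + 24 * (n + 4) * a ^ 3 * b + 12 * (n + 4) * (n + 3) * a ^ 2 * b ^ 2
    + 4 * (n + 4) * (n + 3) * (n + 2) * a * b ^ 3 + (n + 4) * (n + 3) * (n + 2) * (n + 1) * b ^ 4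

lemma pow_mul_binomialHead_le (a b n : ℕ) :
    a ^ n * binomialHead a b n ≤ 24 * (a + b) ^ (n + 4) := by
  induction n with
  | zero => exact le_of_eq (by rw [binomialHead]; ring)
  | succ n ih =>
    have hstep : a ^ (n + 1) * binomialHead a b (n + 1)
        + (n + 4) * (n + 3) * (n + 2) * (n + 1) * a ^ n * b ^ 5
        = (a + b) * (a ^ n * binomialHead a b n) := by
      rw [binomialHead, binomialHead]; ring
    calc a ^ (n + 1) * binomialHead a b (n + 1) ≤ (a + b) * (a ^ n * binomialHead a b n) :=
          hstep ▸ Nat.le_add_right _ _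
      _ ≤ (a + b) * (24 * (a + b) ^ (n + 4)) := Nat.mul_le_mul_left _ ih
      _ = 24 * (a + b) ^ (n + 1 + 4) := by ring

lemma ascFactorial_mul_pow_le (d : ℕ) :
    (9 * d + 2).ascFactorial 9 * (8 * d + 1) ^ (4 * d + 1)
      ≤ 16 * (d + 1) * (4 * d + 1).ascFactorial 4 * (8 * d + 9) ^ (4 * d + 5) := by
  have hpoly : 24 * (9 * d + 2).ascFactorial 9
      ≤ 16 * (d + 1) * (4 * d + 1).ascFactorial 4 * binomialHead (8 * d + 1) 8 (4 * d + 1) := by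
    simp only [binomialHead, Nat.ascFactorial_succ, Nat.ascFactorial_zero]
    zify
    rw [← sub_nonneg]
    ring_nf
    positivity
  have hbin := pow_mul_binomialHead_le (8 * d + 1) 8 (4 * d + 1)
  refine Nat.le_of_mul_le_mul_left ?_ (by norm_num : 0 < 24)
  calc 24 * ((9 * d + 2).ascFactorial 9 * (8 * d + 1) ^ (4 * d + 1))
      ≤ 16 * (d + 1) * (4 * d + 1).ascFactorial 4 * binomialHead (8 * d + 1) 8 (4 * d + 1)
          * (8 * d + 1) ^ (4 * d + 1) := by rw [← mul_assoc]; exact Nat.mul_le_mul_right _ hpoly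
    _ = 16 * (d + 1) * (4 * d + 1).ascFactorial 4
          * ((8 * d + 1) ^ (4 * d + 1) * binomialHead (8 * d + 1) 8 (4 * d + 1)) := by ring
    _ ≤ 16 * (d + 1) * (4 * d + 1).ascFactorial 4 * (24 * (8 * d + 1 + 8) ^ (4 * d + 1 + 4)) :=
          Nat.mul_le_mul_left _ hbin
    _ = 24 * (16 * (d + 1) * (4 * d + 1).ascFactorial 4 * (8 * d + 9) ^ (4 * d + 5)) := by ring

lemma factorial_nine_mul_add_one_lt {d : ℕ} (hd : 1 ≤ d) :
    (9 * d + 1)! < d ! * prodMinTwoMul (8 * d + 1) := by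
  induction d, hd using Nat.le_induction with
  | base => rw [prodMinTwoMul_two_mul_add_one 4]; norm_num [Nat.factorial]
  | succ d hd ih =>
    rw [show 8 * d + 1 = 2 * (4 * d) + 1 by ring, prodMinTwoMul_two_mul_add_one] at ih
    rw [show 8 * (d + 1) + 1 = 2 * (4 * d + 4) + 1 by ring, prodMinTwoMul_two_mul_add_one,
      show 9 * (d + 1) + 1 = 9 * d + 1 + 9 by ring, ← Nat.factorial_mul_ascFactorial,
      ← Nat.factorial_mul_ascFactorial (4 * d), Nat.factorial_succ]
    calc (9 * d + 1)! * (9 * d + 1 + 1).ascFactorial 9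
        < d ! * (2 ^ (4 * d) * (4 * d)! * (2 * (4 * d) + 1) ^ (4 * d + 1))
          * (9 * d + 2).ascFactorial 9 :=
          Nat.mul_lt_mul_of_pos_right ih (Nat.ascFactorial_pos _ _)
      _ = d ! * 2 ^ (4 * d) * (4 * d)!
          * ((9 * d + 2).ascFactorial 9 * (8 * d + 1) ^ (4 * d + 1)) := by ring
      _ ≤ d ! * 2 ^ (4 * d) * (4 * d)!
          * (16 * (d + 1) * (4 * d + 1).ascFactorial 4 * (8 * d + 9) ^ (4 * d + 5)) :=
          Nat.mul_le_mul_left _ (ascFactorial_mul_pow_le d)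
      _ = (d + 1) * d ! * (2 ^ (4 * d + 4) * ((4 * d)! * (4 * d + 1).ascFactorial 4)
          * (2 * (4 * d + 4) + 1) ^ (4 * d + 4 + 1)) := by ring

lemma factorial_lt_factorial_mul_prodMinTwoMul {d n : ℕ} (hd : 1 ≤ d) (hn : 9 * d + 1 ≤ n) :
    n ! < d ! * prodMinTwoMul (n - d) := by
  induction n, hn using Nat.le_induction with
  | base => rw [show 9 * d + 1 - d = 8 * d + 1 by omega]; exact factorial_nine_mul_add_one_lt hd
  | succ n hn ih =>
    calc (n + 1)! = (n + 1) * n ! := Nat.factorial_succ n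
      _ < (n + 1) * (d ! * prodMinTwoMul (n - d)) := Nat.mul_lt_mul_of_pos_left ih (by omega)
      _ = d ! * ((n - d + d + 1) * prodMinTwoMul (n - d)) := by
          rw [Nat.sub_add_cancel (by omega)]; ring
      _ ≤ d ! * prodMinTwoMul (n - d + 1) :=
          Nat.mul_le_mul_left _ (add_mul_prodMinTwoMul_le_succ (by omega))
      _ = d ! * prodMinTwoMul (n + 1 - d) := by rw [Nat.sub_add_comm (by omega)]

lemma choose_mul_factorial_lt_prodMinTwoMul {d n : ℕ} (hd : 1 ≤ d) (hn : 9 * d + 1 ≤ n) :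
    n.choose d * (n - d)! < prodMinTwoMul (n - d) := by
  have h := factorial_lt_factorial_mul_prodMinTwoMul hd hn
  rw [← Nat.choose_mul_factorial_mul_factorial (by omega : d ≤ n), mul_right_comm,
    mul_comm] at h
  exact Nat.lt_of_mul_lt_mul_left h

namespace SC

variable {α : Type*} [DecidableEq α] (K : SC α)

lemma mem_minNonFaces {M : Finset α} :
    M ∈ K.minNonFaces ↔
      M ⊆ K.verts ∧ M ∉ K.faces ∧ ∀ G ⊆ M, G ≠ M → G ∈ K.faces := by
  simp [minNonFaces]

lemma card_le_dimP1 {F : Finset α} (hF : F ∈ K.faces) : F.card ≤ K.dimP1 := le_sup hF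

lemma notMem_faces_of_dimP1_lt_card {S : Finset α} (h : K.dimP1 < S.card) : S ∉ K.faces :=
  fun hS => (K.card_le_dimP1 hS).not_gt h

lemma exists_minNonFaces_subset {S : Finset α} (hS : S ⊆ K.verts) (hnf : S ∉ K.faces) :
    ∃ M ∈ K.minNonFaces, M ⊆ S := by
  obtain ⟨M, hMmem, hMmin⟩ := (S.powerset.filter (· ∉ K.faces)).exists_minimal
    ⟨S, mem_filter.2 ⟨mem_powerset_self S, hnf⟩⟩
  rw [mem_filter, mem_powerset] at hMmem
  refine ⟨M, K.mem_minNonFaces.2 ⟨hMmem.1.trans hS, hMmem.2, fun G hGM hGne => ?_⟩, hMmem.1⟩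
  by_contra hG
  exact hGne (hGM.antisymm (hMmin (mem_filter.2 ⟨mem_powerset.2 (hGM.trans hMmem.1), hG⟩) hGM))

lemma two_le_card_of_mem_minNonFaces (hV : K.verts.Nonempty) {M : Finset α}
    (hM : M ∈ K.minNonFaces) : 2 ≤ M.card := by
  obtain ⟨hMV, hMnf, -⟩ := K.mem_minNonFaces.1 hM
  by_contra! hcard
  obtain ⟨v, hv, hMv⟩ : ∃ v ∈ K.verts, M ⊆ {v} := by
    rcases M.eq_empty_or_nonempty with rfl | ⟨w, hw⟩
    · exact ⟨hV.choose, hV.choose_spec, empty_subset _⟩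
    · exact ⟨w, hMV hw, fun x hx => mem_singleton.2 (card_le_one.1 (by omega) x hx w hw)⟩
  exact hMnf (K.down_closed _ (K.singleton_mem v hv) M hMv)

lemma card_sub_dimP1_le_card_minNonFaces : K.verts.card - K.dimP1 ≤ K.minNonFaces.card := by
  rcases K.faces.eq_empty_or_nonempty with hK | hK
  · have hV : K.verts = ∅ := eq_empty_of_forall_notMem fun v hv => by
      simpa [hK] using K.singleton_mem v hv
    simp [hV]
  obtain ⟨F, hF, hFcard⟩ := exists_mem_eq_sup K.faces hK card
  have hnew : ∀ v ∈ K.verts \ F, ∃ M ∈ K.minNonFaces, v ∈ M ∧ M ⊆ insert v F := by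
    intro v hv
    rw [mem_sdiff] at hv
    have hcard : K.dimP1 < (insert v F).card := by
      rw [card_insert_of_notMem hv.2, dimP1, hFcard]; omega
    obtain ⟨M, hM, hMF⟩ := K.exists_minNonFaces_subset
      (insert_subset hv.1 (K.subset_verts F hF)) (K.notMem_faces_of_dimP1_lt_card hcard)
    refine ⟨M, hM, by_contra fun hvM => (K.mem_minNonFaces.1 hM).2.1 ?_, hMF⟩
    exact K.down_closed F hF M fun x hx =>
      (mem_insert.1 (hMF hx)).resolve_left fun hxv => hvM (hxv ▸ hx)
  choose! f hfmem hvf hfsub using hnew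
  calc K.verts.card - K.dimP1 = (K.verts \ F).card := by
        rw [card_sdiff_of_subset (K.subset_verts F hF), dimP1, hFcard]
    _ ≤ K.minNonFaces.card := card_le_card_of_injOn f hfmem fun v hv w hw hvw =>
        (mem_insert.1 (hfsub w hw (hvw ▸ hvf v hv))).resolve_right (mem_sdiff.1 hv).2

lemma sup_minNonFaces_subset_verts {T : Finset (Finset α)} (hT : T ⊆ K.minNonFaces) :
    T.sup id ⊆ K.verts :=
  Finset.sup_le fun _ hM => (K.mem_minNonFaces.1 (hT hM)).1

lemma exists_minNonFaces_disjoint {U : Finset α} (h : K.dimP1 < (K.verts \ U).card) :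
    ∃ M ∈ K.minNonFaces, Disjoint M U := by
  obtain ⟨M, hM, hMU⟩ :=
    K.exists_minNonFaces_subset sdiff_subset (K.notMem_faces_of_dimP1_lt_card h)
  exact ⟨M, hM, disjoint_of_subset_left hMU sdiff_disjoint⟩

lemma exists_minNonFaces_card_eq_min_le {i : ℕ} (hi : i ≤ K.verts.card - K.dimP1) :
    ∃ T ⊆ K.minNonFaces,
      T.card = i ∧ min (2 * i) (K.verts.card - K.dimP1) ≤ (T.sup id).card := by
  induction i with
  | zero => exact ⟨∅, empty_subset _, rfl, by simp⟩
  | succ i ih =>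
    obtain ⟨T, hT, hTcard, hcover⟩ := ih (by omega)
    have hsupV := K.sup_minNonFaces_subset_verts hT
    by_cases hroom : K.dimP1 < (K.verts \ T.sup id).card
    · obtain ⟨M, hM, hMU⟩ := K.exists_minNonFaces_disjoint hroom
      have hM2 := K.two_le_card_of_mem_minNonFaces (card_pos.1 (by omega)) hM
      have hMT : M ∉ T := fun hMT => by
        have hempty : M = ∅ := disjoint_self.1 (hMU.mono_right (le_sup (f := id) hMT))
        simp [hempty] at hM2
      refine ⟨insert M T, insert_subset hM hT, by rw [card_insert_of_notMem hMT, hTcard], ?_⟩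
      rw [sup_insert, id, sup_eq_union, card_union_of_disjoint hMU]
      omega
    · obtain ⟨M, hM, hMT⟩ := exists_mem_notMem_of_card_lt_card (s := T) (t := K.minNonFaces)
        (by have := K.card_sub_dimP1_le_card_minNonFaces; omega)
      refine ⟨insert M T, insert_subset hM hT, by rw [card_insert_of_notMem hMT, hTcard], ?_⟩
      have hgrow := card_le_card (sup_mono (f := id) (subset_insert M T))
      have := card_sdiff_of_subset hsupV
      omega

lemma card_sup_le_MT {T : Finset (Finset α)} (hT : T ⊆ K.minNonFaces) :
    (T.sup id).card ≤ K.MT T.card :=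
  le_csSup ⟨K.verts.card, by
    rintro _ ⟨T', hT', -, rfl⟩
    exact card_le_card (K.sup_minNonFaces_subset_verts hT')⟩ ⟨T, hT, rfl, rfl⟩

lemma min_two_mul_le_MT {i : ℕ} (hi : i ≤ K.verts.card - K.dimP1) :
    min (2 * i) (K.verts.card - K.dimP1) ≤ K.MT i := by
  obtain ⟨T, hT, rfl, hcover⟩ := K.exists_minNonFaces_card_eq_min_le hi
  exact hcover.trans (K.card_sup_le_MT hT)

lemma fCard_le_choose (j : ℕ) : K.fCard j ≤ K.verts.card.choose j := by
  rw [fCard, ← card_powersetCard]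
  exact card_le_card fun F hF => by
    rw [mem_filter] at hF
    exact mem_powersetCard.2 ⟨K.subset_verts F hF.1, hF.2⟩

end SC

open SC in
/-- A simplicial complex of dimension `d-1` on at least `9d + 1` vertices satisfies the
Taylor upper bound strictly. -/
theorem taylorUB_strict_of_large {α : Type*} [DecidableEq α] (K : SC α) (d : ℕ)
    (hd : 1 ≤ d) (hdim : K.dimP1 = d) (hn : 9 * d + 1 ≤ K.verts.card) :
    (K.fCard d : ℚ) < K.taylorUBval := by
  subst hdim
  set N := K.verts.card - K.dimP1
  have hprod : K.fCard K.dimP1 * N ! < ∏ i ∈ Icc 1 N, K.MT i :=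
    calc K.fCard K.dimP1 * N ! ≤ K.verts.card.choose K.dimP1 * N ! :=
          Nat.mul_le_mul_right _ (K.fCard_le_choose _)
      _ < prodMinTwoMul N := choose_mul_factorial_lt_prodMinTwoMul hd hn
      _ ≤ ∏ i ∈ Icc 1 N, K.MT i :=
          prod_le_prod' fun i hi => K.min_two_mul_le_MT (mem_Icc.1 hi).2
  rw [taylorUBval, lt_div_iff₀ (by positivity)]
  exact_mod_cast hprod
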